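/- Under the hypotheses of the generalized BRS-inequality, E[N(n,s)] ≤ Σ_{k=1}^n F_k(t(n,s)) − (s − E[S_{A(n,s)}])/t(n,s). -/

import Mathlib

/-!
Pointwise, every selected `X i` satisfies `t - X i ≤ (t - X i)⁺`, so
`t * N ≤ S_A + ∑ k, (t - X k)⁺`. Taking expectations, `E (t - X k)⁺ = t F_k(t) - E[X k; X k ≤ t]`,
and these truncated means add up to `s` by the choice of `t`. The only delicate point is that
`A` is measurable: by maximality and the lower-set property, `i ∈ A` exactly when the sum of the
`X j` up to and including `X i`, ordered lexicographically with ties broken by index, is at most `s`.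
-/

open MeasureTheory ProbabilityTheory Finset Set
open scoped Classical

section Selection

variable {ι β : Type*} [Fintype ι] [LinearOrder β] {key : ι → β} {x : ι → ℝ} {s : ℝ}
  {A : Finset ι}

theorem mem_iff_sum_filter_le_of_maximal (hkey : Function.Injective key) (hx : ∀ i, 0 ≤ x i)
    (hAsum : ∑ i ∈ A, x i ≤ s) (hAmax : ∀ B : Finset ι, ∑ i ∈ B, x i ≤ s → B.card ≤ A.card)
    (hAlower : ∀ i ∈ A, ∀ j, key j < key i → j ∈ A) (i : ι) :
    i ∈ A ↔ ∑ j ∈ univ.filter (fun j => key j ≤ key i), x j ≤ s := by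
  constructor
  · intro hi
    have hsub : univ.filter (fun j => key j ≤ key i) ⊆ A := by
      intro j hj
      rcases (mem_filter.1 hj).2.lt_or_eq with hlt | heq
      · exact hAlower i hi j hlt
      · exact hkey heq ▸ hi
    exact (sum_le_sum_of_subset_of_nonneg hsub fun j _ _ => hx j).trans hAsum
  · intro hle
    by_contra hi
    have hsub : A ⊆ univ.filter (fun j => key j < key i) := by
      intro a ha
      refine mem_filter.2 ⟨mem_univ a, ?_⟩
      rcases lt_trichotomy (key a) (key i) with h | h | h
      · exact h
      · exact absurd (hkey h ▸ ha) hi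
      · exact absurd (hAlower a ha i h) hi
    have hssub : univ.filter (fun j => key j < key i) ⊂ univ.filter (fun j => key j ≤ key i) :=
      (Finset.ssubset_iff_of_subset fun j hj => by simpa using (mem_filter.1 hj).2.le).2
        ⟨i, by simp, by simp⟩
    exact (hAmax _ hle).not_gt ((Finset.card_le_card hsub).trans_lt (card_lt_card hssub))

end Selection

section Measurability

variable {Ω ι : Type*} [MeasurableSpace Ω] [Fintype ι]

theorem measurable_sum_of_measurableSet_mem {M : Type*} [AddCommMonoid M] [MeasurableSpace M]
    [MeasurableAdd₂ M] {A : Ω → Finset ι} (hA : ∀ i, MeasurableSet {ω | i ∈ A ω})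
    {f : ι → Ω → M} (hf : ∀ i, Measurable (f i)) :
    Measurable fun ω => ∑ i ∈ A ω, f i ω := by
  have hsum : (fun ω => ∑ i ∈ A ω, f i ω) = fun ω => ∑ i, {ω | i ∈ A ω}.indicator (f i) ω := by
    funext ω
    simp [Set.indicator_apply]
  rw [hsum]
  exact Finset.measurable_sum _ fun i _ => (hf i).indicator (hA i)

theorem integrable_card_of_measurableSet_mem {μ : Measure Ω} [IsFiniteMeasure μ]
    {A : Ω → Finset ι} (hA : ∀ i, MeasurableSet {ω | i ∈ A ω}) :
    Integrable (fun ω => ((A ω).card : ℝ)) μ := by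
  have hmeas : Measurable fun ω => ((A ω).card : ℝ) := by
    simpa using measurable_sum_of_measurableSet_mem hA fun _ => measurable_const (a := (1 : ℝ))
  refine .of_bound hmeas.aestronglyMeasurable (Fintype.card ι) (ae_of_all _ fun ω => ?_)
  simpa using card_le_univ (A ω)

theorem measurable_sum_filter_toLex_le [LinearOrder ι] {X : ι → Ω → ℝ}
    (hX : ∀ i, Measurable (X i)) (i : ι) :
    Measurable fun ω =>
      ∑ j ∈ univ.filter (fun j => toLex (X j ω, j) ≤ toLex (X i ω, i)), X j ω := by
  refine measurable_sum_of_measurableSet_mem (fun j => ?_) hX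
  simp only [Finset.mem_filter_univ, Prod.Lex.toLex_le_toLex]
  exact (measurableSet_lt (hX j) (hX i)).union
    ((measurableSet_eq_fun (hX j) (hX i)).inter (MeasurableSet.const _))

theorem measurableSet_mem_of_maximal [LinearOrder ι] {X : ι → Ω → ℝ} {s : ℝ}
    {A : Ω → Finset ι} (hX : ∀ i, Measurable (X i)) (hX0 : ∀ i ω, 0 ≤ X i ω)
    (hAsum : ∀ ω, ∑ i ∈ A ω, X i ω ≤ s)
    (hAmax : ∀ ω (B : Finset ι), ∑ i ∈ B, X i ω ≤ s → B.card ≤ (A ω).card)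
    (hAlower : ∀ ω, ∀ i ∈ A ω, ∀ j, toLex (X j ω, j) < toLex (X i ω, i) → j ∈ A ω) (i : ι) :
    MeasurableSet {ω | i ∈ A ω} := by
  have hchar : ∀ ω, i ∈ A ω ↔
      ∑ j ∈ univ.filter (fun j => toLex (X j ω, j) ≤ toLex (X i ω, i)), X j ω ≤ s := fun ω =>
    mem_iff_sum_filter_le_of_maximal (fun a b h => congrArg (fun p => (ofLex p).2) h)
      (fun k => hX0 k ω) (hAsum ω) (hAmax ω) (hAlower ω) i
  simp_rw [hchar]
  exact measurableSet_le (measurable_sum_filter_toLex_le hX i) measurable_const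

end Measurability

section Deficiency

variable {Ω : Type*} [MeasurableSpace Ω] {μ : Measure Ω} [IsFiniteMeasure μ] {Y : Ω → ℝ}

theorem integrable_max_sub_zero (hY : Measurable Y) (hY0 : ∀ ω, 0 ≤ Y ω) (t : ℝ) :
    Integrable (fun ω => max (t - Y ω) 0) μ := by
  refine .of_bound ((measurable_const.sub hY).max measurable_const).aestronglyMeasurable |t|
    (ae_of_all _ fun ω => ?_)
  rw [Real.norm_eq_abs, abs_of_nonneg (le_max_right _ _)]
  exact max_le (by linarith [hY0 ω, le_abs_self t]) (abs_nonneg t)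

theorem integral_max_sub_zero (hY : Measurable Y) (hYpos : ∀ ω, 0 < Y ω) (t : ℝ) :
    ∫ ω, max (t - Y ω) 0 ∂μ
      = t * (μ.map Y (Iic t)).toReal - ∫ x in Ioc 0 t, x ∂(μ.map Y) := by
  set E := Y ⁻¹' Iic t
  have hE : MeasurableSet E := hY measurableSet_Iic
  have hYE : Integrable (E.indicator Y) μ := by
    refine .of_bound (hY.indicator hE).aestronglyMeasurable |t| (ae_of_all _ fun ω => ?_)
    by_cases h : Y ω ≤ t
    · simp [E, h, abs_of_pos (hYpos ω), h.trans (le_abs_self t)]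
    · simp [E, h]
  have hmax : ∀ ω, max (t - Y ω) 0 = E.indicator (fun _ => t) ω - E.indicator Y ω := by
    intro ω
    by_cases h : Y ω ≤ t
    · simp [E, h]
    · simp [E, h, (not_le.1 h).le]
  -- positivity of `Y` makes `Y ⁻¹' Ioc 0 t` and `E` literally equal
  have hlaw : ∫ x in Ioc 0 t, x ∂(μ.map Y) = ∫ ω, E.indicator Y ω ∂μ := by
    rw [setIntegral_map (f := fun x => x) measurableSet_Ioc aestronglyMeasurable_id hY.aemeasurable,
      integral_indicator hE]
    congr 2
    ext ω
    simp [E, hYpos ω]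
  simp_rw [hmax]
  rw [integral_sub ((integrable_const t).indicator hE) hYE, integral_indicator_const _ hE,
    hlaw, Measure.map_apply hY measurableSet_Iic, smul_eq_mul, mul_comm, measureReal_def]

end Deficiency

theorem mul_card_le_sum_add_sum_max_sub_zero {ι : Type*} [Fintype ι] (A : Finset ι)
    (x : ι → ℝ) (t : ℝ) :
    t * A.card ≤ ∑ i ∈ A, x i + ∑ i, max (t - x i) 0 := by
  have hdef : ∑ i ∈ A, (t - x i) ≤ ∑ i, max (t - x i) 0 :=
    (sum_le_sum fun i _ => le_max_left _ _).trans
      (sum_le_sum_of_subset_of_nonneg (subset_univ A) fun i _ _ => le_max_right _ _)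
  rw [sum_sub_distrib, sum_const, nsmul_eq_mul] at hdef
  linarith

theorem brs_inequality_refined_general
    {Ω : Type*} [MeasureSpace Ω] [IsProbabilityMeasure (ℙ : Measure Ω)]
    (n : ℕ) (s t : ℝ) (ht : 0 < t)
    (X : Fin n → Ω → ℝ) (hXmeas : ∀ k, Measurable (X k))
    (hXpos : ∀ k ω, 0 < X k ω)
    (F : Fin n → ℝ → ℝ)
    (hF : ∀ k x, F k x = ((Measure.map (X k) ℙ) (Iic x)).toReal)
    (hBRS : ∑ k : Fin n, ∫ x in Ioc (0:ℝ) t, x ∂(Measure.map (X k) ℙ) = s)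
    (N : Ω → ℕ)
    (hN : ∀ ω, N ω = ((Finset.univ.powerset.filter
      (fun A : Finset (Fin n) => ∑ i ∈ A, X i ω ≤ s)).sup Finset.card))
    (A : Ω → Finset (Fin n))
    (hAcard : ∀ ω, (A ω).card = N ω)
    (hAsum : ∀ ω, ∑ i ∈ A ω, X i ω ≤ s)
    (hAinit : ∀ ω, ∀ i ∈ A ω, ∀ j,
      (X j ω < X i ω ∨ (X j ω = X i ω ∧ j < i)) → j ∈ A ω) :
    ∫ ω, (N ω : ℝ) ≤
      (∑ k : Fin n, F k t) - (s - ∫ ω, ∑ i ∈ A ω, X i ω) / t := by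
  have hAmax : ∀ ω (B : Finset (Fin n)), ∑ i ∈ B, X i ω ≤ s → B.card ≤ (A ω).card :=
    fun ω B hB => hAcard ω ▸ hN ω ▸ le_sup (by simpa using hB)
  have hmem : ∀ i, MeasurableSet {ω | i ∈ A ω} :=
    measurableSet_mem_of_maximal hXmeas (fun k ω => (hXpos k ω).le) hAsum hAmax
      fun ω i hi j hj => hAinit ω i hi j (Prod.Lex.toLex_lt_toLex.1 hj)
  have hSint : Integrable (fun ω => ∑ i ∈ A ω, X i ω) ℙ := by
    refine .of_bound (measurable_sum_of_measurableSet_mem hmem hXmeas).aestronglyMeasurable s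
      (ae_of_all _ fun ω => ?_)
    rw [Real.norm_eq_abs, abs_of_nonneg (sum_nonneg fun i _ => (hXpos i ω).le)]
    exact hAsum ω
  have hDint : ∀ k, Integrable (fun ω => max (t - X k ω) 0) ℙ := fun k =>
    integrable_max_sub_zero (hXmeas k) (fun ω => (hXpos k ω).le) t
  have hDsum := integrable_finsetSum univ fun k _ => hDint k
  have hmain : ∫ ω, t * ((A ω).card : ℝ) ≤ ∫ ω, (∑ i ∈ A ω, X i ω + ∑ k, max (t - X k ω) 0) :=
    integral_mono ((integrable_card_of_measurableSet_mem hmem).const_mul t) (hSint.add hDsum)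
      fun ω => mul_card_le_sum_add_sum_max_sub_zero (A ω) (fun k => X k ω) t
  rw [integral_const_mul, integral_add hSint hDsum, integral_finsetSum _ fun k _ => hDint k]
    at hmain
  simp_rw [integral_max_sub_zero (hXmeas _) (hXpos _), ← hF, hAcard] at hmain
  rw [sum_sub_distrib, ← mul_sum, hBRS] at hmain
  rw [le_sub_comm, div_le_iff₀ ht]
  linarith

/-- Refined BRS-inequality (Theorem 3): under the hypotheses of the
generalized BRS-inequality,
`E[N(n,s)] ≤ ∑ k, F k (t(n,s)) − (s − E[S_{A(n,s)}]) / t(n,s)`, where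
`A(n,s)` is the optimal selection set and `S_{A(n,s)}` the sum of the
selected variables. -/
theorem brs_inequality_refined
    {Ω : Type*} [MeasureSpace Ω] [IsProbabilityMeasure (ℙ : Measure Ω)]
    (n : ℕ) (s t : ℝ) (hs : 0 < s) (ht : 0 < t)
    (X : Fin n → Ω → ℝ) (hXmeas : ∀ k, Measurable (X k))
    (hXpos : ∀ k ω, 0 < X k ω)
    (F : Fin n → ℝ → ℝ)
    (hF : ∀ k x, F k x = ((Measure.map (X k) ℙ) (Iic x)).toReal)
    (hBRS : ∑ k : Fin n, ∫ x in Ioc (0:ℝ) t, x ∂(Measure.map (X k) ℙ) = s)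
    (N : Ω → ℕ)
    (hN : ∀ ω, N ω = ((Finset.univ.powerset.filter
      (fun A : Finset (Fin n) => ∑ i ∈ A, X i ω ≤ s)).sup Finset.card))
    (A : Ω → Finset (Fin n))
    (hAcard : ∀ ω, (A ω).card = N ω)
    (hAsum : ∀ ω, ∑ i ∈ A ω, X i ω ≤ s)
    (hAinit : ∀ ω, ∀ i ∈ A ω, ∀ j,
      (X j ω < X i ω ∨ (X j ω = X i ω ∧ j < i)) → j ∈ A ω) :
    ∫ ω, (N ω : ℝ) ≤
      (∑ k : Fin n, F k t) - (s - ∫ ω, ∑ i ∈ A ω, X i ω) / t :=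
  brs_inequality_refined_general n s t ht X hXmeas hXpos F hF hBRS N hN A hAcard hAsum hAinit
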